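/- arXiv:2308.04998 — 2 statements merged into one kernel-verified Lean document; each statement's English description precedes it below -/
import Mathlib

section
/- For all integers n, m ≥ 0, one has D(P_{n,m}) = (m + 3/2)·P_{n,m+1} + (n + 1)·P_{n+1,m} in A. -/
open MvPolynomial

noncomputable section

/-- The polynomial ring `A = ℂ[x₁, x₂, x₃, …]`, with variables indexed by
the positive integers (`X k` is the variable `x_k`). -/
abbrev A : Type := MvPolynomial ℕ+ ℂ

/-- The elementary Schur polynomials `S_k`, defined by the generating identity
`∑_{k≥0} S_k z^k = exp(∑_{n≥1} (x_n/(2n)) z^n)`; equivalently, `S_0 = 1` and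
`(k+1) S_{k+1} = ∑_{j=0}^{k} (x_{k+1-j}/2) S_j` (obtained by differentiating in `z`). -/
noncomputable def S : ℕ → A
  | 0 => 1
  | (k+1) =>
      ((k : ℂ) + 1)⁻¹ • ∑ j ∈ (Finset.range (k+1)).attach,
        (MvPolynomial.C (2⁻¹ : ℂ) * MvPolynomial.X ((k - j.1).succPNat)) * S j.1
  termination_by k => k
  decreasing_by
    have := j.2; simp only [Finset.mem_range] at this; omega

/-- The generalized binomial coefficient `C(1/2, k) = (1/2)(1/2−1)⋯(1/2−k+1)/k!`. -/
noncomputable def halfChoose (k : ℕ) : ℂ :=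
  (∏ i ∈ Finset.range k, ((2⁻¹ : ℂ) - (i : ℂ))) / (k.factorial : ℂ)

/-- `P_{n,m} = ∑_{k=0}^{n} (−1)^k C(1/2,k) S_{m+k} S_{n−k}`. -/
noncomputable def P (n m : ℕ) : A :=
  ∑ k ∈ Finset.range (n+1), ((-1 : ℂ)^k * halfChoose k) • (S (m+k) * S (n-k))

/-- The extremal vectors `φ_n = P_{n,n}`. -/
noncomputable def phi (n : ℕ) : A := P n n

/-- The translation operator `D(p) = x₁·p + ∑_{n≥1} n·x_{n+1}·∂p/∂x_n`
(the sum is finite on each polynomial: only the variables occurring in `p` contribute,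
since `∂p/∂x_n = 0` for `n ∉ p.vars`). -/
noncomputable def D (p : A) : A :=
  MvPolynomial.X 1 * p +
    ∑ n ∈ p.vars, ((n : ℕ) : ℂ) • (MvPolynomial.X (n + 1) * MvPolynomial.pderiv n p)

end

/-!
On `A` one has `D = x₁ · _ + δ`, where `δ` is the derivation with `δ x_n = n x_{n+1}`. With
`T(z) = ∑ x_n z^n / (2n)`, `δ` acts on `T` as `d/dz - x₁/2`, so applying `δ` to
`exp T(z) = ∑ S_k z^k` gives `δ S_k = (k+1) S_{k+1} - (x₁/2) S_k`, and the two `x₁` terms cancel in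
`D (S_a S_b) = (a+1) S_{a+1} S_b + (b+1) S_a S_{b+1}`. Writing `P_{n,m}` as a sum over `k + l = n`,
the theorem then reduces to the recursion `(k+1) e_{k+1} = (k - 1/2) e_k` for
`e_k = (-1)^k C(1/2,k)`.
-/

open Finset

theorem MvPolynomial.derivation_apply_eq_sum_vars {R σ : Type*} [CommSemiring R]
    (d : Derivation R (MvPolynomial σ R) (MvPolynomial σ R)) (f : MvPolynomial σ R) :
    d f = ∑ i ∈ f.vars, d (X i) * pderiv i f := by
  classical
  let d' : Derivation R (MvPolynomial σ R) (MvPolynomial σ R) :=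
    ∑ i ∈ f.vars, d (X i) • pderiv i
  have hd' (g : MvPolynomial σ R) : d' g = ∑ i ∈ f.vars, d (X i) * pderiv i g := by
    rw [← Derivation.coeFnAddMonoidHom_apply, map_sum, Finset.sum_apply]
    rfl
  rw [← hd']
  refine derivation_eq_of_forall_mem_vars fun i hi => ?_
  rw [hd', sum_eq_single_of_mem i hi fun j _ hji => by rw [pderiv_X_of_ne hji.symm, mul_zero],
    pderiv_X_self, mul_one]

theorem Finset.Nat.succ_nsmul_sum_antidiagonal_succ {M : Type*} [AddCommMonoid M] (n : ℕ)
    (f : ℕ × ℕ → M) :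
    (n + 1) • ∑ p ∈ antidiagonal (n + 1), f p =
      ∑ p ∈ antidiagonal n, ((p.1 + 1) • f (p.1 + 1, p.2) + (p.2 + 1) • f (p.1, p.2 + 1)) := by
  calc (n + 1) • ∑ p ∈ antidiagonal (n + 1), f p
      = ∑ p ∈ antidiagonal (n + 1), (p.1 • f p + p.2 • f p) := by
        rw [smul_sum]
        exact sum_congr rfl fun p hp => by rw [← add_smul, mem_antidiagonal.mp hp]
    _ = _ := by
        rw [sum_add_distrib, Nat.sum_antidiagonal_succ, Nat.sum_antidiagonal_succ', zero_smul,
          zero_smul, zero_add, zero_add, ← sum_add_distrib]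

/-- With `T(z) = ∑ T_i z^i` and `S(z) = ∑ S_k z^k`, the hypotheses say `S' = T S`, `S(0) = 1` and
that `d` acts on the `T_i` as `d/dz`; hence `d S = S' - T(0) S`. -/
theorem Derivation.apply_eq_of_antidiagonal_recursion {R B : Type*} [CommSemiring R] [CommRing B]
    [Algebra R B] [IsAddTorsionFree B] (d : Derivation R B B) {T S : ℕ → B} (hS₀ : S 0 = 1)
    (hS : ∀ k, (k + 1) • S (k + 1) = ∑ p ∈ antidiagonal k, T p.1 * S p.2)
    (hT : ∀ i, d (T i) = (i + 1) • T (i + 1)) (k : ℕ) :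
    d (S k) = (k + 1) • S (k + 1) - T 0 * S k := by
  induction k using Nat.strong_induction_on with
  | _ k ih =>
  cases k with
  | zero => simpa [hS₀, eq_comm (a := (0 : B)), sub_eq_zero] using hS 0
  | succ k =>
    apply nsmul_right_injective k.succ_ne_zero
    calc (k + 1) • d (S (k + 1))
        = ∑ p ∈ antidiagonal k, (T p.1 * d (S p.2) + S p.2 * d (T p.1)) := by
          rw [← map_nsmul, hS, map_sum]
          simp only [Derivation.leibniz, smul_eq_mul]
      _ = ∑ p ∈ antidiagonal k,
            ((p.1 + 1) • (T (p.1 + 1) * S p.2) + (p.2 + 1) • (T p.1 * S (p.2 + 1)))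
            - T 0 * ∑ p ∈ antidiagonal k, T p.1 * S p.2 := by
          rw [mul_sum, ← sum_sub_distrib]
          refine sum_congr rfl fun p hp => ?_
          rw [ih p.2 (Nat.antidiagonal.snd_lt hp), hT]
          simp only [mul_sub, mul_smul_comm]
          ring
      _ = (k + 1) • ((k + 1 + 1) • S (k + 1 + 1) - T 0 * S (k + 1)) := by
          rw [← Nat.succ_nsmul_sum_antidiagonal_succ (f := fun p => T p.1 * S p.2), ← hS, ← hS,
            smul_sub, mul_smul_comm]

noncomputable def shiftDerivation : Derivation ℂ A A :=
  mkDerivation ℂ fun n => ((n : ℕ) : ℂ) • X (n + 1)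

lemma shiftDerivation_X (n : ℕ+) : shiftDerivation (X n) = ((n : ℕ) : ℂ) • X (n + 1) :=
  mkDerivation_X _ _ _

lemma D_eq_mul_add_shiftDerivation (p : A) : D p = X 1 * p + shiftDerivation p := by
  rw [D, derivation_apply_eq_sum_vars shiftDerivation p]
  congr 1
  exact sum_congr rfl fun n _ => by rw [shiftDerivation_X, smul_mul_assoc]

lemma D_smul (c : ℂ) (p : A) : D (c • p) = c • D p := by
  rw [D_eq_mul_add_shiftDerivation, D_eq_mul_add_shiftDerivation, Derivation.map_smul,
    mul_smul_comm, smul_add]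

lemma D_sum {ι : Type*} (s : Finset ι) (f : ι → A) : D (∑ i ∈ s, f i) = ∑ i ∈ s, D (f i) := by
  simp only [D_eq_mul_add_shiftDerivation, map_sum, mul_sum, sum_add_distrib]

lemma succ_nsmul_S_succ (k : ℕ) :
    (k + 1) • S (k + 1) = ∑ p ∈ antidiagonal k, C (2⁻¹ : ℂ) * X p.1.succPNat * S p.2 := by
  rw [S, ← Nat.cast_smul_eq_nsmul ℂ, Nat.cast_add_one, smul_inv_smul₀ k.cast_add_one_ne_zero,
    sum_attach (range (k + 1)) fun j => C (2⁻¹ : ℂ) * X (k - j).succPNat * S j,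
    ← Nat.sum_antidiagonal_swap, ← Nat.sum_antidiagonal_eq_sum_range_succ
      fun j i => C (2⁻¹ : ℂ) * X i.succPNat * S j]
  rfl

lemma shiftDerivation_S (k : ℕ) :
    shiftDerivation (S k) = (k + 1) • S (k + 1) - C (2⁻¹ : ℂ) * X 1 * S k := by
  have hS₀ : S 0 = 1 := by rw [S]
  have hT (i : ℕ) : shiftDerivation (C (2⁻¹ : ℂ) * X i.succPNat) =
      (i + 1) • (C (2⁻¹ : ℂ) * X (i + 1).succPNat) := by
    rw [← smul_eq_C_mul, ← smul_eq_C_mul, Derivation.map_smul, shiftDerivation_X,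
      Nat.succPNat_coe, smul_comm, Nat.cast_smul_eq_nsmul]
    rfl
  have h := shiftDerivation.apply_eq_of_antidiagonal_recursion
    (T := fun i => C (2⁻¹ : ℂ) * X i.succPNat) hS₀ succ_nsmul_S_succ hT k
  rwa [show Nat.succPNat 0 = 1 from rfl] at h

lemma D_S_mul (a b : ℕ) :
    D (S a * S b) = (a + 1) • (S (a + 1) * S b) + (b + 1) • (S a * S (b + 1)) := by
  have h : (C (2⁻¹ : ℂ) : A) + C 2⁻¹ = 1 := by rw [← map_add]; norm_num
  rw [D_eq_mul_add_shiftDerivation, Derivation.leibniz, shiftDerivation_S, shiftDerivation_S,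
    smul_eq_mul, smul_eq_mul]
  linear_combination (-(X 1 * S a * S b)) * h

noncomputable def signedHalfChoose (k : ℕ) : ℂ := (-1) ^ k * halfChoose k

lemma succ_mul_halfChoose_succ (k : ℕ) :
    ((k : ℂ) + 1) * halfChoose (k + 1) = halfChoose k * (2⁻¹ - k) := by
  rw [halfChoose, halfChoose, prod_range_succ, Nat.factorial_succ, Nat.cast_mul, Nat.cast_add_one]
  field_simp

lemma succ_mul_signedHalfChoose_succ (k : ℕ) :
    ((k : ℂ) + 1) * signedHalfChoose (k + 1) = signedHalfChoose k * (k - 2⁻¹) := by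
  rw [signedHalfChoose, signedHalfChoose, pow_succ, mul_left_comm, succ_mul_halfChoose_succ]
  ring

lemma P_eq_sum_antidiagonal (n m : ℕ) :
    P n m = ∑ p ∈ antidiagonal n, signedHalfChoose p.1 • (S (m + p.1) * S p.2) :=
  (Nat.sum_antidiagonal_eq_sum_range_succ
    (fun i j => signedHalfChoose i • (S (m + i) * S j)) n).symm

/-- `D(P_{n,m}) = (m + 3/2) P_{n,m+1} + (n + 1) P_{n+1,m}` for all `n, m ≥ 0`. -/
theorem D_P_eq (n m : ℕ) :
    D (P n m) = ((m : ℂ) + 3/2) • P n (m+1) + ((n : ℂ) + 1) • P (n+1) m := by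
  simp only [P_eq_sum_antidiagonal]
  rw [← Nat.cast_add_one, Nat.cast_smul_eq_nsmul, Nat.succ_nsmul_sum_antidiagonal_succ, smul_sum,
    ← sum_add_distrib, D_sum]
  refine sum_congr rfl fun ⟨k, l⟩ _ => ?_
  simp only [D_smul, D_S_mul, ← Nat.cast_smul_eq_nsmul ℂ, Nat.cast_add_one, Nat.cast_add]
  rw [add_right_comm m 1 k, ← add_assoc m k 1]
  linear_combination (norm := module) -(succ_mul_signedHalfChoose_succ k • (S (m + k + 1) * S l))
end

section
/- The family of polynomials {P_{n,m} : m ≥ n ≥ 0} is linearly independent over ℂ in A. -/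
open MvPolynomial

/-!
With `lowering a = 2a ∂/∂x_a`, differentiating the generating function gives
`lowering a (S k) = S (k - a)`, and `S k` has constant term `δ_{k,0}`. Evaluating at the origin
after `1`, `lowering b`, or `lowering a ∘ lowering b - lowering (a + b)` therefore gives, for each
`a ≤ b`, a functional `L` with `L (S i * S j) = [(i, j) = (a, b)] + [(i, j) = (b, a)]`; the
subtracted term cancels the contributions of `S (a + b) * S 0` and `S 0 * S (a + b)`.
Since `P n m = S m * S n + ∑_{k ≥ 1} c_k S (m + k) * S (n - k)`, the functional attached to
`(a, b)` does not vanish on `P a b` and kills every other `P n m` with `m - n ≥ b - a`: the family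
is triangular with respect to `m - n`.
-/

open Finset

theorem linearIndependent_of_triangular {ι R M : Type*} [Ring R] [NoZeroDivisors R]
    [AddCommGroup M] [Module R M] {v : ι → M} {r : ι → ι → Prop} (hr : WellFounded r)
    (L : ι → M →ₗ[R] R) (hdiag : ∀ i, L i (v i) ≠ 0)
    (htri : ∀ i j, L i (v j) ≠ 0 → j = i ∨ r j i) :
    LinearIndependent R v := by
  classical
  rw [linearIndependent_iff']
  intro s g hg i
  induction i using hr.induction with
  | _ i ih =>
  intro hi
  have hsum : ∑ j ∈ s, g j * L i (v j) = 0 := by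
    simpa only [map_sum, map_smul, smul_eq_mul, map_zero] using congrArg (L i) hg
  rw [sum_eq_single i (fun j hj hji => ?_) (absurd hi)] at hsum
  · exact (mul_eq_zero.mp hsum).resolve_right (hdiag i)
  · by_cases hj0 : L i (v j) = 0
    · rw [hj0, mul_zero]
    · rcases htri i j hj0 with rfl | hji'
      · exact absurd rfl hji
      · rw [ih j hji' hj, zero_mul]

section Derivation

variable {R A B : Type*} [CommSemiring R] [CommSemiring A] [Algebra R A] [CommSemiring B]

theorem map_derivation_mul (φ : A →+* B) (D : Derivation R A A) (f g : A) :
    φ (D (f * g)) = φ (D f) * φ g + φ f * φ (D g) := by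
  rw [Derivation.leibniz, map_add, smul_eq_mul, smul_eq_mul, map_mul, map_mul]
  ring

theorem map_derivation_derivation_mul (φ : A →+* B) (D D' : Derivation R A A) (f g : A) :
    φ (D (D' (f * g))) =
      φ (D (D' f)) * φ g + φ (D' f) * φ (D g) + φ (D f) * φ (D' g) + φ f * φ (D (D' g)) := by
  simp only [Derivation.leibniz, smul_eq_mul, map_add, map_mul]
  ring

end Derivation

theorem S_zero : S 0 = 1 := by rw [S]

theorem S_succ_smul (k : ℕ) :
    (2 * ((k : ℂ) + 1)) • S (k + 1) = ∑ j ∈ range (k + 1), X (k - j).succPNat * S j := by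
  have hk : (k : ℂ) + 1 ≠ 0 := Nat.cast_add_one_ne_zero k
  rw [S, smul_smul, mul_assoc, mul_inv_cancel₀ hk, mul_one, sum_attach (range (k + 1))
    (fun j => C (2⁻¹ : ℂ) * X (k - j).succPNat * S j), smul_sum]
  refine sum_congr rfl fun j _ => ?_
  rw [mul_assoc, C_mul', smul_smul]
  norm_num

noncomputable def lowering (a : ℕ+) : Derivation ℂ A A := (2 * (a : ℂ)) • pderiv a

theorem lowering_X (a c : ℕ+) : lowering a (X c) = if c = a then C (2 * (a : ℂ)) else 0 := by
  rw [lowering, Derivation.smul_apply, pderiv_X]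
  split_ifs with h
  · subst h; rw [Pi.single_eq_same, smul_eq_C_mul, mul_one]
  · rw [Pi.single_eq_of_ne h, smul_zero]

theorem sum_X_mul_S_sub (a : ℕ+) (k : ℕ) :
    ∑ j ∈ range (k + 1), X (k - j).succPNat * (if (a : ℕ) ≤ j then S (j - a) else 0) =
      if (a : ℕ) ≤ k then (2 * (((k - a : ℕ) : ℂ) + 1)) • S (k - a + 1) else 0 := by
  split_ifs with h
  · obtain ⟨r, rfl⟩ := Nat.exists_eq_add_of_le h
    rw [add_assoc, sum_range_add, sum_eq_zero fun j hj => by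
      rw [if_neg (by simpa using hj), mul_zero], zero_add, Nat.add_sub_cancel_left, S_succ_smul]
    refine sum_congr rfl fun j _ => ?_
    rw [if_pos (Nat.le_add_right _ _), Nat.add_sub_cancel_left, Nat.add_sub_add_left]
  · exact sum_eq_zero fun j hj => by
      rw [if_neg (by have := mem_range.mp hj; omega), mul_zero]

theorem sum_S_mul_lowering_X (a : ℕ+) (k : ℕ) :
    ∑ j ∈ range (k + 1), S j * lowering a (X (k - j).succPNat) =
      if (a : ℕ) ≤ k + 1 then (2 * (a : ℂ)) • S (k + 1 - a) else 0 := by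
  have ha := a.pos
  have hcoe : ∀ j, (k - j).succPNat = a ↔ (k - j) + 1 = a := fun j => by
    rw [← PNat.coe_inj, Nat.succPNat_coe]
  simp only [lowering_X, mul_ite, mul_zero, hcoe]
  split_ifs with h
  · rw [sum_eq_single_of_mem (k + 1 - a) (mem_range.mpr (by omega)) fun j hj hne => by
      rw [if_neg (by have := mem_range.mp hj; omega)], if_pos (by omega), mul_comm, C_mul']
  · exact sum_eq_zero fun j hj => by rw [if_neg (by have := mem_range.mp hj; omega)]

theorem lowering_S (a : ℕ+) (k : ℕ) :
    lowering a (S k) = if (a : ℕ) ≤ k then S (k - a) else 0 := by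
  induction k using Nat.strong_induction_on with
  | _ k ih =>
  rcases k with _ | k
  · rw [S_zero, Derivation.map_one_eq_zero, if_neg (by have := a.pos; omega)]
  have hk : (2 * ((k : ℂ) + 1)) ≠ 0 := mul_ne_zero two_ne_zero (Nat.cast_add_one_ne_zero k)
  apply smul_right_injective A hk
  have hlow : ∀ j ∈ range (k + 1), lowering a (X (k - j).succPNat * S j) =
      X (k - j).succPNat * (if (a : ℕ) ≤ j then S (j - a) else 0) +
        S j * lowering a (X (k - j).succPNat) := fun j hj => by
    rw [Derivation.leibniz, smul_eq_mul, smul_eq_mul, ih j (by simpa using hj)]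
  dsimp only
  rw [← (lowering a).map_smul, S_succ_smul, map_sum, sum_congr rfl hlow, sum_add_distrib,
    sum_X_mul_S_sub, sum_S_mul_lowering_X]
  split_ifs with h₁ h₂ h₂
  · rw [show k - a + 1 = k + 1 - a by omega, ← add_smul]
    congr 1
    push_cast [Nat.cast_sub h₁]
    ring
  · omega
  · rw [zero_add, show (a : ℕ) = k + 1 by omega, Nat.sub_self]
    push_cast
    ring_nf
  · rw [add_zero, smul_zero]

theorem aeval_zero_S (k : ℕ) : aeval (0 : ℕ+ → ℂ) (S k) = if k = 0 then 1 else 0 := by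
  rcases k with _ | k
  · rw [S_zero, map_one, if_pos rfl]
  have h := congrArg (aeval (0 : ℕ+ → ℂ)) (S_succ_smul k)
  simp only [map_smul, map_sum, map_mul, aeval_X, Pi.zero_apply, zero_mul, sum_const_zero,
    smul_eq_mul, mul_eq_zero, OfNat.ofNat_ne_zero, Nat.cast_add_one_ne_zero, false_or] at h
  rw [h, if_neg (Nat.succ_ne_zero k)]

theorem aeval_zero_lowering_S (a : ℕ+) (k : ℕ) :
    aeval (0 : ℕ+ → ℂ) (lowering a (S k)) = if k = a then 1 else 0 := by
  rw [lowering_S, apply_ite (aeval (0 : ℕ+ → ℂ)), map_zero, aeval_zero_S]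
  split_ifs <;> first | rfl | omega

theorem aeval_zero_lowering_lowering_S (a b : ℕ+) (k : ℕ) :
    aeval (0 : ℕ+ → ℂ) (lowering a (lowering b (S k))) = if k = a + b then 1 else 0 := by
  rw [lowering_S, apply_ite (lowering a), map_zero, apply_ite (aeval (0 : ℕ+ → ℂ)), map_zero,
    aeval_zero_lowering_S]
  split_ifs <;> first | rfl | omega

def IsDualToSProd (L : A →ₗ[ℂ] ℂ) (a b : ℕ) : Prop :=
  ∀ i j, L (S i * S j) = (if i = a ∧ j = b then 1 else 0) + (if i = b ∧ j = a then 1 else 0)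

theorem isDualToSProd_zero_zero :
    IsDualToSProd ((2 : ℂ) • (aeval (0 : ℕ+ → ℂ)).toLinearMap) 0 0 := by
  intro i j
  simp only [LinearMap.smul_apply, AlgHom.toLinearMap_apply, map_mul, aeval_zero_S,
    ite_zero_mul_ite_zero, mul_one, smul_eq_mul, two_mul]

theorem isDualToSProd_zero_pnat (b : ℕ+) :
    IsDualToSProd ((aeval (0 : ℕ+ → ℂ)).toLinearMap ∘ₗ (lowering b).toLinearMap) 0 b := by
  intro i j
  simp only [LinearMap.comp_apply, AlgHom.toLinearMap_apply, Derivation.coeFn_coe]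
  rw [← AlgHom.coe_toRingHom, map_derivation_mul]
  simp only [AlgHom.coe_toRingHom, aeval_zero_S, aeval_zero_lowering_S, ite_zero_mul_ite_zero,
    mul_one]
  exact add_comm _ _

theorem isDualToSProd_pnat_pnat (a b : ℕ+) :
    IsDualToSProd ((aeval (0 : ℕ+ → ℂ)).toLinearMap ∘ₗ (lowering a).toLinearMap ∘ₗ
      (lowering b).toLinearMap - (aeval (0 : ℕ+ → ℂ)).toLinearMap ∘ₗ (lowering (a + b)).toLinearMap)
      a b := by
  have hsum (k : ℕ) :
      aeval (0 : ℕ+ → ℂ) (lowering (a + b) (S k)) = if k = a + b then 1 else 0 := by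
    rw [aeval_zero_lowering_S, PNat.add_coe]
  intro i j
  simp only [LinearMap.sub_apply, LinearMap.comp_apply, AlgHom.toLinearMap_apply,
    Derivation.coeFn_coe]
  rw [← AlgHom.coe_toRingHom, map_derivation_derivation_mul, map_derivation_mul]
  simp only [AlgHom.coe_toRingHom, aeval_zero_S, aeval_zero_lowering_S, hsum,
    aeval_zero_lowering_lowering_S, ite_zero_mul_ite_zero, mul_one]
  ring

theorem exists_isDualToSProd (a b : ℕ) (hab : a ≤ b) : ∃ L, IsDualToSProd L a b := by
  rcases Nat.eq_zero_or_pos b with rfl | hb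
  · obtain rfl : a = 0 := Nat.le_zero.mp hab
    exact ⟨_, isDualToSProd_zero_zero⟩
  lift b to ℕ+ using hb
  rcases Nat.eq_zero_or_pos a with rfl | ha
  · exact ⟨_, isDualToSProd_zero_pnat b⟩
  lift a to ℕ+ using ha
  exact ⟨_, isDualToSProd_pnat_pnat a b⟩

namespace IsDualToSProd

variable {L : A →ₗ[ℂ] ℂ} {a b : ℕ}

theorem apply_P (hL : IsDualToSProd L a b) (n m : ℕ) :
    L (P n m) = ∑ k ∈ range (n + 1), (-1) ^ k * halfChoose k *
      ((if m + k = a ∧ n - k = b then 1 else 0) + (if m + k = b ∧ n - k = a then 1 else 0)) := by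
  rw [P, map_sum]
  refine sum_congr rfl fun k _ => ?_
  rw [map_smul, hL, smul_eq_mul]

theorem apply_P_self_ne_zero (hL : IsDualToSProd L a b) (hab : a ≤ b) : L (P a b) ≠ 0 := by
  rw [hL.apply_P, sum_eq_single_of_mem 0 (by simp) fun k hk hk0 => by
    rw [if_neg (by omega), if_neg (by omega), add_zero, mul_zero]]
  simp only [pow_zero, halfChoose, range_zero, prod_empty, Nat.factorial_zero, Nat.cast_one,
    div_one, mul_one, add_zero, Nat.sub_zero, and_self, if_true, one_mul]
  split_ifs <;> norm_num

theorem eq_or_lt_of_apply_P_ne_zero (hL : IsDualToSProd L a b) (hab : a ≤ b) {n m : ℕ}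
    (hnm : n ≤ m) (h : L (P n m) ≠ 0) : (n = a ∧ m = b) ∨ m - n < b - a := by
  rw [hL.apply_P] at h
  obtain ⟨k, hk, hne⟩ := exists_ne_zero_of_sum_ne_zero h
  rw [mem_range] at hk
  split_ifs at hne <;> first | omega | simp at hne

end IsDualToSProd

/-- The family `{P_{n,m} : m ≥ n ≥ 0}` is linearly independent over `ℂ`. -/
theorem P_linearIndependent :
    LinearIndependent ℂ (fun q : {q : ℕ × ℕ // q.1 ≤ q.2} => P q.1.1 q.1.2) := by
  choose L hL using fun q : {q : ℕ × ℕ // q.1 ≤ q.2} => exists_isDualToSProd q.1.1 q.1.2 q.2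
  refine linearIndependent_of_triangular (measure fun q => q.1.2 - q.1.1).wf L
    (fun q => (hL q).apply_P_self_ne_zero q.2) ?_
  rintro ⟨⟨a, b⟩, hab⟩ ⟨⟨n, m⟩, hnm⟩ h
  rcases (hL _).eq_or_lt_of_apply_P_ne_zero hab hnm h with ⟨rfl, rfl⟩ | hlt
  · exact Or.inl rfl
  · exact Or.inr hlt
end
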